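/- arXiv:2512.04634 — 4 statements merged into one kernel-verified Lean document; each statement's English description precedes it below -/
import Mathlib

section
/- Let n ≥ 1 and a, δ ∈ ℝ. Define B₁₁ ∈ ℝ^{n×n} by: the first row is zero, and for i = 2,…,n row i has entry 1 in column i−1, entry −1 in column i, and 0 elsewhere. Define B₁₂ ∈ ℝ^{n×n} by: the first row has all entries equal to 1, and for i = 2,…,n row i has entry δ in column i−1, entry −δ in column i, and 0 elsewhere. Let 𝓑 ∈ ℝ^{2n×2n} be the block matrix 𝓑 = [[B₁₁, B₁₂], [−aIₙ, Iₙ]]. Then det 𝓑 = (−1)^{n−1} · n · a · (1 + aδ)^{n−1}. -/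
open Matrix

theorem stmt_0 (n : ℕ) (hn : 1 ≤ n) (a δ : ℝ)
    (B11 B12 : Matrix (Fin n) (Fin n) ℝ)
    (hB11 : ∀ i j : Fin n, B11 i j =
      if (i : ℕ) = 0 then 0
      else if (j : ℕ) = (i : ℕ) - 1 then 1
      else if j = i then -1 else 0)
    (hB12 : ∀ i j : Fin n, B12 i j =
      if (i : ℕ) = 0 then 1
      else if (j : ℕ) = (i : ℕ) - 1 then δ
      else if j = i then -δ else 0) :
    (Matrix.fromBlocks B11 B12 (-(a • (1 : Matrix (Fin n) (Fin n) ℝ))) 1).det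
      = (-1 : ℝ) ^ (n - 1) * n * a * (1 + a * δ) ^ (n - 1) := by
  obtain ⟨m, rfl⟩ : ∃ m, n = m + 1 := ⟨n - 1, (Nat.succ_pred_eq_of_pos hn).symm⟩
  -- auxiliary matrices
  set N : Matrix (Fin (m+1)) (Fin (m+1)) ℝ := fun i j =>
    if (i : ℕ) = 0 then 1
    else if (j : ℕ) = (i : ℕ) - 1 then 1
    else if j = i then -1 else 0 with hN
  set d : Fin (m+1) → ℝ := fun i => if (i : ℕ) = 0 then a else 1 + a * δ with hd
  set U : Matrix (Fin (m+1)) (Fin (m+1)) ℝ := fun j k => if j ≤ k then (1:ℝ) else 0 with hU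
  rw [Matrix.det_fromBlocks_one₂₂]
  have hfac : B11 - B12 * (-(a • (1 : Matrix (Fin (m+1)) (Fin (m+1)) ℝ)))
      = Matrix.diagonal d * N := by
    ext i j
    have : (Matrix.diagonal d * N) i j = d i * N i j := by
      rw [Matrix.diagonal_mul]
    rw [this]
    simp only [Matrix.sub_apply, Matrix.mul_neg, Matrix.mul_smul, Matrix.mul_one,
      Matrix.neg_apply, Matrix.smul_apply, smul_eq_mul, hB11, hB12, hN, hd]
    by_cases hi : (i : ℕ) = 0
    · simp [hi]
    · by_cases h1 : (j : ℕ) = (i : ℕ) - 1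
      · simp only [hi, if_false, h1, if_true]
        ring
      · by_cases h2 : j = i
        · subst h2
          have h1' : ¬ ((j : ℕ) = (j : ℕ) - 1) := by omega
          simp only [hi, if_false, h1', if_true]
          ring
        · simp [hi, h1, h2]
  rw [hfac, Matrix.det_mul, Matrix.det_diagonal]
  -- determinant of diagonal part
  have hdetd : ∏ i, d i = a * (1 + a * δ) ^ m := by
    rw [Fin.prod_univ_succ]
    have h0 : d 0 = a := by simp [hd]
    have hs : ∀ i : Fin m, d i.succ = 1 + a * δ := by
      intro i; simp [hd, Fin.val_succ]
    rw [h0]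
    congr 1
    rw [Finset.prod_congr rfl fun i _ => hs i, Finset.prod_const, Finset.card_univ,
      Fintype.card_fin]
  -- determinant of U
  have hUtri : U.BlockTriangular id := by
    intro i j hij
    simp only [hU]
    exact if_neg (not_le_of_gt hij)
  have hdetU : U.det = 1 := by
    rw [Matrix.det_of_upperTriangular hUtri]
    simp [hU]
  -- entries of N * U
  have hNU : ∀ i k : Fin (m+1), (N * U) i k =
      if (i : ℕ) = 0 then ((k : ℕ) + 1 : ℝ)
      else if (k : ℕ) = (i : ℕ) - 1 then 1 else 0 := by
    intro i k
    rw [Matrix.mul_apply]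
    by_cases hi : (i : ℕ) = 0
    · rw [if_pos hi]
      have hterm : ∀ j : Fin (m+1), N i j * U j k
          = if j ≤ k then (1:ℝ) else 0 := by
        intro j
        show (if (i:ℕ) = 0 then (1:ℝ) else _) * (if j ≤ k then (1:ℝ) else 0) = _
        rw [if_pos hi, one_mul]
      rw [Finset.sum_congr rfl fun j _ => hterm j, Finset.sum_boole]
      have hfil : Finset.filter (fun j => j ≤ k) Finset.univ = Finset.Iic k := by
        ext x; simp
      rw [hfil, Fin.card_Iic]
      push_cast
      ring
    · have hi1 : (i : ℕ) - 1 < m + 1 := by omega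
      set i₁ : Fin (m+1) := ⟨(i:ℕ)-1, hi1⟩ with hi₁
      have hne : i₁ ≠ i := by
        intro h
        have := congrArg Fin.val h
        simp [hi₁] at this
        omega
      have hsplit : ∀ j : Fin (m+1), N i j
          = (if j = i₁ then (1:ℝ) else 0) + (if j = i then (-1:ℝ) else 0) := by
        intro j
        show (if (i:ℕ) = 0 then (1:ℝ) else if (j:ℕ) = (i:ℕ)-1 then 1
          else if j = i then -1 else 0) = _
        rw [if_neg hi]
        simp only [Fin.ext_iff, hi₁]
        have := i.isLt
        split_ifs <;> first | omega | norm_num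
      rw [if_neg hi]
      calc (∑ j, N i j * U j k)
          = ∑ j : Fin (m+1), ((if j = i₁ then U j k else 0) + (if j = i then -U j k else 0)) := by
            apply Finset.sum_congr rfl
            intro j _
            rw [hsplit j, add_mul, ite_mul, ite_mul, one_mul, zero_mul, neg_one_mul]
        _ = U i₁ k - U i k := by
            rw [Finset.sum_add_distrib, Fintype.sum_ite_eq' i₁ (fun j => U j k),
              Fintype.sum_ite_eq' i (fun j => -U j k)]
            ring
        _ = if (k : ℕ) = (i : ℕ) - 1 then 1 else 0 := by
            show (if i₁ ≤ k then (1:ℝ) else 0) - (if i ≤ k then (1:ℝ) else 0) = _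
            simp only [Fin.le_def, hi₁]
            have hk := k.isLt
            have hii := i.isLt
            split_ifs <;> first | omega | norm_num
  -- the cyclic permutation
  set σ : Equiv.Perm (Fin (m+1)) := (finRotate (m+1))⁻¹ with hσdef
  have hσ0 : σ 0 = Fin.last m := by
    rw [hσdef, Equiv.Perm.inv_eq_iff_eq, finRotate_succ_apply, Fin.last_add_one]
  have hσk : ∀ k : Fin (m+1), k ≠ 0 → σ k = ⟨(k:ℕ)-1, by omega⟩ := by
    intro k hk
    rw [hσdef, Equiv.Perm.inv_eq_iff_eq, finRotate_succ_apply]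
    apply Fin.ext
    rw [Fin.val_add]
    have hk1 : 1 ≤ (k : ℕ) := by
      rcases Nat.eq_zero_or_pos (k : ℕ) with h | h
      · exact absurd (Fin.ext (by simp [h])) hk
      · exact h
    have hkm : (k : ℕ) < m + 1 := k.isLt
    have h1 : ((1 : Fin (m+1)) : ℕ) = 1 := by
      rw [Fin.val_one']
      exact Nat.mod_eq_of_lt (by omega)
    simp only [h1]
    exact (by rw [Nat.mod_eq_of_lt (by omega)]; omega :
      ((k:ℕ) - 1 + 1) % (m+1) = (k:ℕ)).symm
  set S : Matrix (Fin (m+1)) (Fin (m+1)) ℝ := (N * U).submatrix id σ with hS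
  have hStri : S.BlockTriangular id := by
    intro i j hij
    simp only [id] at hij
    simp only [hS, Matrix.submatrix_apply, id]
    rw [hNU]
    have hi : (i : ℕ) ≠ 0 := by
      intro h
      have : (j : ℕ) < (i : ℕ) := hij
      omega
    rw [if_neg hi, if_neg]
    by_cases hj : j = 0
    · subst hj
      rw [hσ0]
      have := i.isLt
      simp only [Fin.val_last]
      omega
    · rw [hσk j hj]
      have hij' : (j : ℕ) < (i : ℕ) := hij
      have hj1 : 1 ≤ (j : ℕ) := by
        rcases Nat.eq_zero_or_pos (j : ℕ) with h | h
        · exact absurd (Fin.ext (by simp [h])) hj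
        · exact h
      simp only
      omega
  have hdiag : ∏ i, S i i = (m + 1 : ℝ) := by
    rw [Fin.prod_univ_succ]
    have h00 : S 0 0 = (m + 1 : ℝ) := by
      simp only [hS, Matrix.submatrix_apply, id]
      rw [hNU, hσ0]
      simp
    have hss : ∀ i : Fin m, S i.succ i.succ = 1 := by
      intro i
      simp only [hS, Matrix.submatrix_apply, id]
      rw [hNU]
      have hne : (i.succ : Fin (m+1)) ≠ 0 := Fin.succ_ne_zero i
      have hne' : ((i.succ : Fin (m+1)) : ℕ) ≠ 0 := by
        simp [Fin.val_succ]
      rw [if_neg hne', hσk _ hne, if_pos rfl]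
    rw [h00, Finset.prod_congr rfl fun i _ => hss i, Finset.prod_const, one_pow, mul_one]
  have hsign : ((Equiv.Perm.sign σ : ℤ) : ℝ) = (-1 : ℝ) ^ m := by
    rw [hσdef, Equiv.Perm.sign_inv, sign_finRotate]
    push_cast
    ring
  have hdetS : S.det = (m + 1 : ℝ) := by
    rw [Matrix.det_of_upperTriangular hStri, hdiag]
  have hdetNU : (N * U).det = (-1 : ℝ) ^ m * (m + 1 : ℝ) := by
    have := Matrix.det_permute' σ (N * U)
    rw [← hS, hdetS, hsign] at this
    have hsq : ((-1 : ℝ) ^ m) * ((-1 : ℝ) ^ m) = 1 := by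
      rw [← pow_add]
      simp [pow_mul_comm, ← two_mul, pow_mul]
    calc (N * U).det = ((-1:ℝ)^m * (-1:ℝ)^m) * (N*U).det := by rw [hsq, one_mul]
      _ = (-1:ℝ)^m * ((-1:ℝ)^m * (N*U).det) := by ring
      _ = (-1:ℝ)^m * (m+1 : ℝ) := by rw [← this]
  have hdetN : N.det = (-1 : ℝ) ^ m * (m + 1 : ℝ) := by
    have : N.det = N.det * U.det := by rw [hdetU, mul_one]
    rw [this, ← Matrix.det_mul, hdetNU]
  rw [hdetN, hdetd]
  have : ((m : ℝ) + 1) = ((m + 1 : ℕ) : ℝ) := by push_cast; ring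
  simp only [Nat.add_sub_cancel]
  push_cast
  ring
end

section
/- Let N ≥ 1, let 0 < u₁ < u₂ < ⋯ < u_N be distinct positive real numbers, and for j = 1,…,N let Q_j be a real polynomial that is odd (Q_j(−v) = −Q_j(v)) and has degree exactly 2j−1. Then the N×N matrix with entries (Q_j(u_i))_{i,j} is invertible. -/
open Matrix Polynomial

theorem stmt_9 (N : ℕ) (hN : 1 ≤ N) (u : Fin N → ℝ)
    (hpos : ∀ i, 0 < u i) (hmono : StrictMono u)
    (Q : Fin N → Polynomial ℝ)
    (hodd : ∀ j : Fin N, ∀ v : ℝ, (Q j).eval (-v) = -((Q j).eval v))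
    (hdeg : ∀ j : Fin N, (Q j).degree = (2 * (j : ℕ) + 1 : ℕ)) :
    IsUnit (Matrix.of fun i j : Fin N => (Q j).eval (u i)).det := by
  classical
  rw [isUnit_iff_ne_zero]
  intro hdet
  obtain ⟨c, hc, hmul⟩ := Matrix.exists_mulVec_eq_zero_iff.mpr hdet
  -- the linear combination polynomial
  set p : Polynomial ℝ := ∑ j, Polynomial.C (c j) * Q j with hp
  have hQ0 : ∀ j, (Q j).eval 0 = 0 := by
    intro j
    have := hodd j 0
    rw [neg_zero] at this
    linarith
  have heval : ∀ i, p.eval (u i) = 0 := by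
    intro i
    have := congrFun hmul i
    simpa [p, Polynomial.eval_finset_sum, Matrix.mulVec, dotProduct,
      mul_comm] using this
  -- define the root family
  have hinj : Function.Injective (fun x : Option (Fin N ⊕ Fin N) =>
      x.elim 0 (Sum.elim u (fun i => -u i))) := by
    intro a b hab
    match a, b with
    | none, none => rfl
    | none, some (.inl i) => exact absurd hab.symm (ne_of_gt (hpos i))
    | none, some (.inr i) => exact absurd hab.symm (ne_of_lt (neg_neg_iff_pos.mpr (hpos i)))
    | some (.inl i), none => exact absurd hab (ne_of_gt (hpos i))
    | some (.inr i), none => exact absurd hab (ne_of_lt (neg_neg_iff_pos.mpr (hpos i)))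
    | some (.inl i), some (.inl j) =>
        simp only [Option.elim, Sum.elim_inl] at hab
        simp [hmono.injective hab]
    | some (.inl i), some (.inr j) =>
        exact absurd hab (by simp; nlinarith [hpos i, hpos j])
    | some (.inr i), some (.inl j) =>
        exact absurd hab (by simp; nlinarith [hpos i, hpos j])
    | some (.inr i), some (.inr j) =>
        simp only [Option.elim, Sum.elim_inr, neg_inj] at hab
        simp [hmono.injective hab]
  have hpodd : ∀ v : ℝ, p.eval (-v) = -p.eval v := by
    intro v
    simp only [p, Polynomial.eval_finset_sum, Polynomial.eval_mul, Polynomial.eval_C,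
      hodd, mul_neg, Finset.sum_neg_distrib]
  have hdegp : p.natDegree < 2 * N + 1 := by
    have : p.natDegree ≤ 2 * (N - 1) + 1 := by
      apply Polynomial.natDegree_sum_le_of_forall_le
      intro j _
      have h1 : (Q j).natDegree = 2 * (j : ℕ) + 1 :=
        Polynomial.natDegree_eq_of_degree_eq_some (hdeg j)
      calc (Polynomial.C (c j) * Q j).natDegree ≤ (Q j).natDegree :=
            Polynomial.natDegree_C_mul_le _ _
        _ ≤ 2 * (N - 1) + 1 := by
            rw [h1]; have := j.2; omega
    omega
  have hp0 : p = 0 := by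
    apply Polynomial.eq_zero_of_natDegree_lt_card_of_eval_eq_zero p hinj
    · rintro (_ | i | i)
      · have := hpodd 0
        rw [neg_zero] at this
        simp only [Option.elim]
        linarith
      · exact heval i
      · simp only [Option.elim, Sum.elim_inr]
        rw [hpodd]
        simp [heval i]
    · simp only [Fintype.card_option, Fintype.card_sum, Fintype.card_fin]
      omega
  -- now conclude c = 0, contradiction
  apply hc
  by_contra hc0
  have hex : ∃ j, c j ≠ 0 := by
    by_contra h
    push_neg at h
    exact hc0 (funext h)
  -- take maximal j with c j ≠ 0
  let S : Finset (Fin N) := Finset.univ.filter (fun j => c j ≠ 0)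
  have hSne : S.Nonempty := by
    obtain ⟨j, hj⟩ := hex
    exact ⟨j, by simp [S, hj]⟩
  set j := S.max' hSne with hj
  have hjmem : c j ≠ 0 := by
    have := S.max'_mem hSne
    simpa [S] using this
  have hcoef : p.coeff (2 * (j : ℕ) + 1) = c j * (Q j).coeff (2 * (j : ℕ) + 1) := by
    rw [hp, Polynomial.finset_sum_coeff]
    rw [Finset.sum_eq_single j]
    · simp
    · intro k _ hkj
      rcases eq_or_ne (c k) 0 with h | h
      · simp [h]
      · have hkS : k ∈ S := by simp [S, h]
        have hkle : k ≤ j := S.le_max' k hkS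
        have hklt : (k : ℕ) < (j : ℕ) := by
          rcases lt_or_eq_of_le hkle with h' | h'
          · exact h'
          · exact absurd h' hkj
        have : (Q k).coeff (2 * (j : ℕ) + 1) = 0 := by
          apply Polynomial.coeff_eq_zero_of_degree_lt
          rw [hdeg k]
          exact_mod_cast by omega
        simp [this]
    · simp
  have hlead : (Q j).coeff (2 * (j : ℕ) + 1) ≠ 0 := by
    have hne : Q j ≠ 0 := fun h => by
      have := hdeg j
      rw [h, Polynomial.degree_zero] at this
      exact absurd this (by exact_mod_cast WithBot.bot_ne_coe)
    have : (Q j).natDegree = 2 * (j : ℕ) + 1 :=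
      Polynomial.natDegree_eq_of_degree_eq_some (hdeg j)
    rw [← this]
    exact Polynomial.leadingCoeff_ne_zero.mpr hne
  rw [hp0] at hcoef
  simp only [Polynomial.coeff_zero] at hcoef
  exact hjmem (by
    rcases mul_eq_zero.mp hcoef.symm with h | h
    · exact h
    · exact absurd h hlead)
end

section
/- Let N ≥ 1 and n ≥ 3 be integers, let V, W ∈ ℝ^{N×N} be diagonal matrices with strictly positive diagonal entries, and let S ∈ ℝ^{2N×2N} be invertible with S^{−1} = [[W, 0], [0, W]] Sᵀ. Define A = S [[−V, 0], [0, V]] S^{−1} and B₂ = [I_N, (n−1)I_N] ∈ ℝ^{N×2N}. Then: (a) a vector y ∈ ℝ^{2N} satisfies B₂ S^{−1} y = 0 if and only if y = S ((n−1)x, −x)ᵀ for some x ∈ ℝ^N; and (b) for every such y with x ≠ 0, yᵀ A y = −(n² − 2n) xᵀ W^{−1} V x < 0. Hence B₂ S^{−1} satisfies the strictly dissipative condition yᵀAy < 0 for all nonzero y ∈ ker(B₂S^{−1}). -/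
/-!
The relation `S⁻¹ = diag(W, W) Sᵀ` says `Sᵀ S = diag(W⁻¹, W⁻¹)`, so in the coordinates
`u = S⁻¹ y` the form `yᵀ A y` becomes `uᵀ diag(-W⁻¹V, W⁻¹V) u`. The kernel of `B₂` consists of
the `u = ((n-1)x, -x)`, on which this form equals `-((n-1)² - 1) xᵀ W⁻¹V x`; it is negative for
`n ≥ 3` and `x ≠ 0` because `W⁻¹V` is a positive diagonal matrix.
-/

open Matrix

namespace Matrix

variable {ι m R : Type*} [Fintype ι] [Fintype m] [DecidableEq m] [CommRing R]

lemma inv_mulVec_eq_iff_eq_mulVec {S : Matrix m m R} (hS : IsUnit S.det) (y u : m → R) :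
    S⁻¹ *ᵥ y = u ↔ y = S *ᵥ u := by
  constructor <;> rintro rfl
  · rw [mulVec_mulVec, mul_nonsing_inv S hS, one_mulVec]
  · rw [mulVec_mulVec, nonsing_inv_mul S hS, one_mulVec]

lemma transpose_mul_self_eq_inv {S D : Matrix m m R} (hS : IsUnit S.det)
    (hSinv : S⁻¹ = D * Sᵀ) : Sᵀ * S = D⁻¹ :=
  (inv_eq_right_inv (by rw [← Matrix.mul_assoc, ← hSinv, nonsing_inv_mul S hS])).symm

lemma mulVec_dotProduct_conj_mulVec {S : Matrix m m R} (hS : IsUnit S.det) (Λ : Matrix m m R)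
    (u : m → R) : S *ᵥ u ⬝ᵥ (S * Λ * S⁻¹) *ᵥ (S *ᵥ u) = u ⬝ᵥ (Sᵀ * S * Λ) *ᵥ u := by
  rw [mulVec_mulVec, Matrix.mul_assoc, nonsing_inv_mul S hS, Matrix.mul_one]
  simp only [← mulVec_mulVec]
  rw [dotProduct_mulVec u, vecMul_transpose]

lemma sumElim_dotProduct_fromBlocks_mulVec (P Q : Matrix ι ι R) (a b : ι → R) :
    Sum.elim a b ⬝ᵥ fromBlocks P 0 0 Q *ᵥ Sum.elim a b = a ⬝ᵥ P *ᵥ a + b ⬝ᵥ Q *ᵥ b := by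
  simp [fromBlocks_mulVec, sumElim_dotProduct_sumElim]

lemma sumElim_dotProduct_fromBlocks_neg_mulVec (M : Matrix ι ι R) (c : R) (x : ι → R) :
    Sum.elim (fun i => c * x i) (fun i => -x i) ⬝ᵥ
        fromBlocks (-M) 0 0 M *ᵥ Sum.elim (fun i => c * x i) (fun i => -x i) =
      -(c ^ 2 - 1) * (x ⬝ᵥ M *ᵥ x) := by
  rw [sumElim_dotProduct_fromBlocks_mulVec]
  change c • x ⬝ᵥ (-M) *ᵥ (c • x) + (-x) ⬝ᵥ M *ᵥ (-x) = _
  simp only [neg_mulVec, mulVec_smul, mulVec_neg, smul_dotProduct, dotProduct_smul,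
    neg_dotProduct, dotProduct_neg, smul_eq_mul, smul_neg]
  ring

lemma mulVec_dotProduct_conj_fromBlocks_neg_mulVec [DecidableEq ι]
    {S : Matrix (ι ⊕ ι) (ι ⊕ ι) R} {W : Matrix ι ι R} (hS : IsUnit S.det)
    (hSinv : S⁻¹ = fromBlocks W 0 0 W * Sᵀ) (V : Matrix ι ι R) (c : R) (x : ι → R) :
    S *ᵥ Sum.elim (fun i => c * x i) (fun i => -x i) ⬝ᵥ
        (S * fromBlocks (-V) 0 0 V * S⁻¹) *ᵥ (S *ᵥ Sum.elim (fun i => c * x i) (fun i => -x i)) =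
      -(c ^ 2 - 1) * (x ⬝ᵥ (W⁻¹ * V) *ᵥ x) := by
  have hStS : Sᵀ * S = fromBlocks W⁻¹ 0 0 W⁻¹ := by
    rw [transpose_mul_self_eq_inv hS hSinv, inv_fromBlocks_zero₂₁_of_isUnit_iff _ _ _ Iff.rfl]
    simp
  rw [mulVec_dotProduct_conj_mulVec hS, hStS, fromBlocks_multiply]
  simp only [Matrix.mul_zero, Matrix.zero_mul, add_zero, zero_add, Matrix.mul_neg, neg_zero]
  exact sumElim_dotProduct_fromBlocks_neg_mulVec _ c x

variable [DecidableEq ι]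

lemma fromCols_one_smul_one_mulVec_eq_zero_iff (c : R) (z : ι ⊕ ι → R) :
    fromCols (1 : Matrix ι ι R) (c • 1) *ᵥ z = 0 ↔
      ∃ x : ι → R, z = Sum.elim (fun i => c * x i) (fun i => -x i) := by
  rw [fromCols_mulVec, smul_mulVec, one_mulVec, one_mulVec]
  constructor
  · intro h
    refine ⟨fun i => -z (Sum.inr i), funext fun j => ?_⟩
    rcases j with i | i
    · simpa [eq_neg_iff_add_eq_zero, mul_comm] using congrFun h i
    · simp
  · rintro ⟨x, rfl⟩
    ext i
    simp

lemma posDef_inv_diagonal_mul_diagonal {v w : ι → ℝ} (hv : ∀ i, 0 < v i) (hw : ∀ i, 0 < w i) :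
    ((diagonal w)⁻¹ * diagonal v).PosDef := by
  have hWinv : (diagonal w)⁻¹ = diagonal fun i => (w i)⁻¹ :=
    inv_eq_left_inv <| by simp [fun i => (hw i).ne']
  rw [hWinv, diagonal_mul_diagonal, posDef_diagonal_iff]
  exact fun i => mul_pos (inv_pos.mpr (hw i)) (hv i)

end Matrix

theorem stmt_12_general (N n : ℕ) (hn : 3 ≤ n)
    (v w : Fin N → ℝ) (hv : ∀ i, 0 < v i) (hw : ∀ i, 0 < w i)
    (V W : Matrix (Fin N) (Fin N) ℝ)
    (hV : V = Matrix.diagonal v) (hW : W = Matrix.diagonal w)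
    (S : Matrix (Fin N ⊕ Fin N) (Fin N ⊕ Fin N) ℝ) (hS : IsUnit S.det)
    (hSinv : S⁻¹ = Matrix.fromBlocks W 0 0 W * Sᵀ)
    (A : Matrix (Fin N ⊕ Fin N) (Fin N ⊕ Fin N) ℝ)
    (hA : A = S * Matrix.fromBlocks (-V) 0 0 V * S⁻¹)
    (B₂ : Matrix (Fin N) (Fin N ⊕ Fin N) ℝ)
    (hB₂ : ∀ (i : Fin N) (j : Fin N ⊕ Fin N), B₂ i j =
      Sum.elim (fun j' : Fin N => if i = j' then (1 : ℝ) else 0)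
        (fun j' : Fin N => if i = j' then ((n : ℝ) - 1) else 0) j) :
    (∀ y : Fin N ⊕ Fin N → ℝ,
      B₂.mulVec (S⁻¹.mulVec y) = 0 ↔
        ∃ x : Fin N → ℝ,
          y = S.mulVec (Sum.elim (fun i => ((n : ℝ) - 1) * x i) (fun i => -x i))) ∧
    (∀ x : Fin N → ℝ, x ≠ 0 →
      (S.mulVec (Sum.elim (fun i => ((n : ℝ) - 1) * x i) (fun i => -x i))) ⬝ᵥ
          A.mulVec (S.mulVec (Sum.elim (fun i => ((n : ℝ) - 1) * x i) (fun i => -x i)))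
        = -((n : ℝ) ^ 2 - 2 * n) * (x ⬝ᵥ (W⁻¹ * V).mulVec x) ∧
      (S.mulVec (Sum.elim (fun i => ((n : ℝ) - 1) * x i) (fun i => -x i))) ⬝ᵥ
          A.mulVec (S.mulVec (Sum.elim (fun i => ((n : ℝ) - 1) * x i) (fun i => -x i)))
        < 0) ∧
    (∀ y : Fin N ⊕ Fin N → ℝ, y ≠ 0 → B₂.mulVec (S⁻¹.mulVec y) = 0 →
      y ⬝ᵥ A.mulVec y < 0) := by
  
  have hB : B₂ = fromCols 1 (((n : ℝ) - 1) • 1) := by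
    ext i (j | j) <;> simp [hB₂, one_apply]
  have hkernel : ∀ y, B₂ *ᵥ (S⁻¹ *ᵥ y) = 0 ↔
      ∃ x : Fin N → ℝ, y = S *ᵥ Sum.elim (fun i => ((n : ℝ) - 1) * x i) (fun i => -x i) := by
    intro y
    rw [hB, fromCols_one_smul_one_mulVec_eq_zero_iff]
    exact exists_congr fun x => inv_mulVec_eq_iff_eq_mulVec hS _ _
  have hquad : ∀ x : Fin N → ℝ,
      S *ᵥ Sum.elim (fun i => ((n : ℝ) - 1) * x i) (fun i => -x i) ⬝ᵥ
          A *ᵥ (S *ᵥ Sum.elim (fun i => ((n : ℝ) - 1) * x i) (fun i => -x i))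
        = -((n : ℝ) ^ 2 - 2 * n) * (x ⬝ᵥ (W⁻¹ * V) *ᵥ x) := by
    intro x
    rw [hA, mulVec_dotProduct_conj_fromBlocks_neg_mulVec hS hSinv]
    ring
  have hcoeff : 0 < (n : ℝ) ^ 2 - 2 * n := by
    have : (3 : ℝ) ≤ n := by exact_mod_cast hn
    nlinarith
  have hneg : ∀ x : Fin N → ℝ, x ≠ 0 →
      S *ᵥ Sum.elim (fun i => ((n : ℝ) - 1) * x i) (fun i => -x i) ⬝ᵥ
          A *ᵥ (S *ᵥ Sum.elim (fun i => ((n : ℝ) - 1) * x i) (fun i => -x i)) < 0 := by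
    intro x hx
    have hpos := (posDef_inv_diagonal_mul_diagonal hv hw).dotProduct_mulVec_pos hx
    rw [← hV, ← hW] at hpos
    rw [hquad]
    exact mul_neg_of_neg_of_pos (neg_neg_of_pos hcoeff) (by simpa using hpos)
  refine ⟨hkernel, fun x hx => ⟨hquad x, hneg x hx⟩, fun y hy hy₀ => ?_⟩
  obtain ⟨x, rfl⟩ := (hkernel y).mp hy₀
  refine hneg x fun hx => hy ?_
  subst hx
  convert mulVec_zero S
  ext (i | i) <;> simp

theorem stmt_12 (N n : ℕ) (hN : 1 ≤ N) (hn : 3 ≤ n)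
    (v w : Fin N → ℝ) (hv : ∀ i, 0 < v i) (hw : ∀ i, 0 < w i)
    (V W : Matrix (Fin N) (Fin N) ℝ)
    (hV : V = Matrix.diagonal v) (hW : W = Matrix.diagonal w)
    (S : Matrix (Fin N ⊕ Fin N) (Fin N ⊕ Fin N) ℝ) (hS : IsUnit S.det)
    (hSinv : S⁻¹ = Matrix.fromBlocks W 0 0 W * Sᵀ)
    (A : Matrix (Fin N ⊕ Fin N) (Fin N ⊕ Fin N) ℝ)
    (hA : A = S * Matrix.fromBlocks (-V) 0 0 V * S⁻¹)
    (B₂ : Matrix (Fin N) (Fin N ⊕ Fin N) ℝ)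
    (hB₂ : ∀ (i : Fin N) (j : Fin N ⊕ Fin N), B₂ i j =
      Sum.elim (fun j' : Fin N => if i = j' then (1 : ℝ) else 0)
        (fun j' : Fin N => if i = j' then ((n : ℝ) - 1) else 0) j) :
    (∀ y : Fin N ⊕ Fin N → ℝ,
      B₂.mulVec (S⁻¹.mulVec y) = 0 ↔
        ∃ x : Fin N → ℝ,
          y = S.mulVec (Sum.elim (fun i => ((n : ℝ) - 1) * x i) (fun i => -x i))) ∧
    (∀ x : Fin N → ℝ, x ≠ 0 →
      (S.mulVec (Sum.elim (fun i => ((n : ℝ) - 1) * x i) (fun i => -x i))) ⬝ᵥ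
          A.mulVec (S.mulVec (Sum.elim (fun i => ((n : ℝ) - 1) * x i) (fun i => -x i)))
        = -((n : ℝ) ^ 2 - 2 * n) * (x ⬝ᵥ (W⁻¹ * V).mulVec x) ∧
      (S.mulVec (Sum.elim (fun i => ((n : ℝ) - 1) * x i) (fun i => -x i))) ⬝ᵥ
          A.mulVec (S.mulVec (Sum.elim (fun i => ((n : ℝ) - 1) * x i) (fun i => -x i)))
        < 0) ∧
    (∀ y : Fin N ⊕ Fin N → ℝ, y ≠ 0 → B₂.mulVec (S⁻¹.mulVec y) = 0 →
      y ⬝ᵥ A.mulVec y < 0) :=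
  stmt_12_general N n hn v w hv hw V W hV hW S hS hSinv A hA B₂ hB₂
end

section
/- Let n ≥ 2 and m ≥ 1 be integers and let C, D ∈ ℝ^{m×m}. Define the block matrix K ∈ ℝ^{nm×nm} whose first block row is (C, C, …, C) and whose i-th block row, for i = 2,…,n, has D in block column 1, −D in block column i, and 0 in all other block columns. Then K is invertible if and only if both C and D are invertible. -/
/-!
Index the blocks by `ι`, with `i₀` in the role of the first one, and write a vector blockwise as
`x = (x_i)_{i : ι}`. Then `K x = 0` says `C (∑ i, x_i) = 0` and
`D (x_{i₀} - x_i) = 0` for `i ≠ i₀`. If `C` and `D` are injective, all blocks equal `x_{i₀}` and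
`|ι| • C x_{i₀} = 0`, so `x = 0`. Conversely, a kernel vector `v` of `C` gives the kernel vector
`(v, …, v)` of `K`, and one of `D` gives `v` in block `i₀`, `-v` in one other block and `0` elsewhere.
-/

open Matrix

theorem Matrix.mulVec_eq_zero_iff_of_det_ne_zero {κ R : Type*} [Fintype κ] [DecidableEq κ]
    [CommRing R] [IsDomain R] {A : Matrix κ κ R} (hA : A.det ≠ 0) {v : κ → R} :
    A *ᵥ v = 0 ↔ v = 0 := by
  refine ⟨fun h => ?_, fun h => h ▸ mulVec_zero A⟩
  by_contra hv
  exact hA (exists_mulVec_eq_zero_iff.mp ⟨v, hv, h⟩)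

def couplingMatrix {ι κ R : Type*} [DecidableEq ι] [Neg R] [Zero R] (i₀ : ι)
    (C D : Matrix κ κ R) : Matrix (ι × κ) (ι × κ) R :=
  fun p q => if p.1 = i₀ then C p.2 q.2 else if q.1 = i₀ then D p.2 q.2
    else if q.1 = p.1 then -D p.2 q.2 else 0

section

variable {ι κ R : Type*} [Fintype ι] [DecidableEq ι] [Fintype κ] [CommRing R]
  (i₀ : ι) (C D : Matrix κ κ R)

theorem couplingMatrix_mulVec_apply (x : ι × κ → R) (i : ι) (k : κ) :
    (couplingMatrix i₀ C D *ᵥ x) (i, k) =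
      if i = i₀ then (C *ᵥ ∑ j, Function.curry x j) k
      else (D *ᵥ (Function.curry x i₀ - Function.curry x i)) k := by
  simp only [mulVec, dotProduct, Fintype.sum_prod_type, couplingMatrix]
  split_ifs with hi
  · simp only [Finset.sum_apply, Finset.mul_sum, Function.curry]
    exact Finset.sum_comm
  · rw [Fintype.sum_eq_add i₀ i (Ne.symm hi) fun j hj => by simp [hj.1, hj.2]]
    simp [hi, mul_add, Finset.sum_add_distrib, Function.curry, sub_eq_add_neg]

theorem couplingMatrix_mulVec_eq_zero_iff (x : ι × κ → R) :
    couplingMatrix i₀ C D *ᵥ x = 0 ↔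
      C *ᵥ ∑ j, Function.curry x j = 0 ∧
        ∀ i ≠ i₀, D *ᵥ (Function.curry x i₀ - Function.curry x i) = 0 := by
  constructor
  · intro h
    refine ⟨funext fun k => ?_, fun i hi => funext fun k => ?_⟩
    · simpa [couplingMatrix_mulVec_apply] using congrFun h (i₀, k)
    · simpa [couplingMatrix_mulVec_apply, hi] using congrFun h (i, k)
  · rintro ⟨hC, hD⟩
    ext ⟨i, k⟩
    rw [couplingMatrix_mulVec_apply]
    split_ifs with hi
    · simp [hC]
    · simp [hD i hi]

end

section

variable {ι κ R : Type*} [Fintype ι] [DecidableEq ι] [Fintype κ] [DecidableEq κ]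
  [CommRing R] [IsDomain R] (i₀ : ι) (C D : Matrix κ κ R)

theorem det_couplingMatrix_eq_zero_of_det_left (hC : C.det = 0) :
    (couplingMatrix i₀ C D).det = 0 := by
  obtain ⟨v, hv, hCv⟩ := exists_mulVec_eq_zero_iff.mpr hC
  refine exists_mulVec_eq_zero_iff.mp
    ⟨Function.uncurry fun _ => v, fun h => hv (funext fun l => congrFun h (i₀, l)), ?_⟩
  rw [couplingMatrix_mulVec_eq_zero_iff, Function.curry_uncurry]
  simp only [Finset.sum_const, mulVec_smul, hCv, smul_zero, sub_self, mulVec_zero, implies_true,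
    and_self]

theorem det_couplingMatrix_eq_zero_of_det_right {i₁ : ι} (hi₁ : i₁ ≠ i₀) (hD : D.det = 0) :
    (couplingMatrix i₀ C D).det = 0 := by
  obtain ⟨v, hv, hDv⟩ := exists_mulVec_eq_zero_iff.mpr hD
  set y : ι → κ → R := Pi.single i₀ v - Pi.single i₁ v
  refine exists_mulVec_eq_zero_iff.mp ⟨Function.uncurry y, fun h => hv (funext fun l => ?_), ?_⟩
  · simpa [y, hi₁.symm] using congrFun h (i₀, l)
  rw [couplingMatrix_mulVec_eq_zero_iff, Function.curry_uncurry]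
  refine ⟨?_, fun i hi => ?_⟩
  · simp [y, Finset.sum_sub_distrib]
  · by_cases h : i = i₁
    · simp [y, h, hi₁, hi₁.symm, mulVec_add, hDv]
    · simp [y, h, hi, hi₁.symm, hDv]

theorem det_couplingMatrix_ne_zero (hn : (Fintype.card ι : R) ≠ 0) (hC : C.det ≠ 0)
    (hD : D.det ≠ 0) : (couplingMatrix i₀ C D).det ≠ 0 := by
  intro hK
  obtain ⟨x, hx, hKx⟩ := exists_mulVec_eq_zero_iff.mpr hK
  rw [couplingMatrix_mulVec_eq_zero_iff] at hKx
  obtain ⟨hCx, hDx⟩ := hKx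
  have hconst : ∀ i, Function.curry x i = Function.curry x i₀ := fun i => by
    by_cases hi : i = i₀
    · rw [hi]
    · exact (sub_eq_zero.mp ((mulVec_eq_zero_iff_of_det_ne_zero hD).mp (hDx i hi))).symm
  have hx₀ : Function.curry x i₀ = 0 := by
    simpa only [hconst, Finset.sum_const, Finset.card_univ, mulVec_smul,
      ← Nat.cast_smul_eq_nsmul R, smul_eq_zero, hn, false_or,
      mulVec_eq_zero_iff_of_det_ne_zero hC] using hCx
  exact hx (funext fun p => (congrFun (hconst p.1) p.2).trans (congrFun hx₀ p.2))

theorem det_couplingMatrix_eq_zero_iff [Nontrivial ι] (hn : (Fintype.card ι : R) ≠ 0) :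
    (couplingMatrix i₀ C D).det = 0 ↔ C.det = 0 ∨ D.det = 0 := by
  refine ⟨fun hK => ?_, ?_⟩
  · by_contra! h
    exact det_couplingMatrix_ne_zero i₀ C D hn h.1 h.2 hK
  · rintro (hC | hD)
    · exact det_couplingMatrix_eq_zero_of_det_left i₀ C D hC
    · obtain ⟨i₁, hi₁⟩ := exists_ne i₀
      exact det_couplingMatrix_eq_zero_of_det_right i₀ C D hi₁ hD

end

theorem stmt_13_general (n m : ℕ) (hn : 2 ≤ n)
    (C D : Matrix (Fin m) (Fin m) ℝ)
    (K : Matrix (Fin n × Fin m) (Fin n × Fin m) ℝ)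
    (hK : ∀ (i : Fin n) (k : Fin m) (j : Fin n) (l : Fin m),
      K (i, k) (j, l) =
        if (i : ℕ) = 0 then C k l
        else if (j : ℕ) = 0 then D k l
        else if j = i then -(D k l) else 0) :
    IsUnit K.det ↔ IsUnit C.det ∧ IsUnit D.det := by
  have : Nontrivial (Fin n) := Fin.nontrivial_iff_two_le.mpr hn
  have hK' : K = couplingMatrix ⟨0, by omega⟩ C D := by
    ext ⟨i, k⟩ ⟨j, l⟩
    simp [hK, couplingMatrix, Fin.ext_iff]
  have hcard : (Fintype.card (Fin n) : ℝ) ≠ 0 := by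
    rw [Fintype.card_fin]
    exact_mod_cast (by omega : n ≠ 0)
  simp only [isUnit_iff_ne_zero, hK', ne_eq, det_couplingMatrix_eq_zero_iff _ C D hcard, not_or]

theorem stmt_13 (n m : ℕ) (hn : 2 ≤ n) (hm : 1 ≤ m)
    (C D : Matrix (Fin m) (Fin m) ℝ)
    (K : Matrix (Fin n × Fin m) (Fin n × Fin m) ℝ)
    (hK : ∀ (i : Fin n) (k : Fin m) (j : Fin n) (l : Fin m),
      K (i, k) (j, l) =
        if (i : ℕ) = 0 then C k l
        else if (j : ℕ) = 0 then D k l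
        else if j = i then -(D k l) else 0) :
    IsUnit K.det ↔ IsUnit C.det ∧ IsUnit D.det :=
  stmt_13_general n m hn C D K hK
end
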